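/- arXiv:1709.00553 — 5 statements merged into one kernel-verified Lean document; each statement's English description precedes it below -/
import Mathlib

section
/- Let G be a simple undirected graph on n vertices, and call a vertex heavy if its degree is at least √n. Let p be a shortest path in G and let Y be a set of vertices on p, each of which is heavy or adjacent to a heavy vertex, such that any two distinct vertices of Y are at distance at least 5 apart along p. Then |Y| ≤ √n. -/
lemma walk_of_eq_or_adj {V : Type*} (G : SimpleGraph V) :
    ∀ a b : V, (a = b ∨ G.Adj a b) → ∃ q : G.Walk a b, q.length ≤ 1 := by
  rintro a b (rfl | h)
  · exact ⟨SimpleGraph.Walk.nil, by simp⟩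
  · exact ⟨h.toWalk, by simp⟩

/-- If `Y` is a set of vertices on a shortest path, each heavy (degree at least √n)
or adjacent to a heavy vertex, with any two distinct members at distance at least 5
apart along the path, then `|Y| ≤ √n`. -/
theorem stmt_2 {V : Type*} [Fintype V] [DecidableEq V] (G : SimpleGraph V)
    [DecidableRel G.Adj] (s t : V) (p : G.Walk s t) (hshortest : p.length = G.dist s t)
    (Y : Finset V) (hYp : ∀ v ∈ Y, v ∈ p.support)
    (hheavy : ∀ v ∈ Y, Real.sqrt (Fintype.card V) ≤ (G.degree v : ℝ) ∨
      ∃ u, G.Adj v u ∧ Real.sqrt (Fintype.card V) ≤ (G.degree u : ℝ))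
    (hsep : ∀ u ∈ Y, ∀ v ∈ Y, u ≠ v → 5 ≤ G.dist u v) :
    (Y.card : ℝ) ≤ Real.sqrt (Fintype.card V) := by
  by_cases hn : Fintype.card V = 0
  · have : Y = ∅ := Finset.eq_empty_of_forall_notMem fun x _ => by
      haveI := Fintype.card_eq_zero_iff.mp hn
      exact this.elim x
    simp [this, Real.sqrt_nonneg]
  -- choose a heavy vertex near each y
  have hch : ∀ v : V, ∃ u : V, v ∈ Y →
      (v = u ∨ G.Adj v u) ∧ Real.sqrt (Fintype.card V) ≤ (G.degree u : ℝ) := by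
    intro v
    by_cases hv : v ∈ Y
    · rcases hheavy v hv with h | ⟨u, hadj, hd⟩
      · exact ⟨v, fun _ => ⟨Or.inl rfl, h⟩⟩
      · exact ⟨u, fun _ => ⟨Or.inr hadj, hd⟩⟩
    · exact ⟨v, fun h => absurd h hv⟩
  choose f hf using hch
  set S : V → Finset V := fun y => insert (f y) (G.neighborFinset (f y)) with hS
  have hScard : ∀ y ∈ Y, Real.sqrt (Fintype.card V) ≤ ((S y).card : ℝ) := by
    intro y hy
    have h1 : (S y).card = G.degree (f y) + 1 := by
      rw [hS]
      simp only []
      rw [Finset.card_insert_of_notMem (by simp [SimpleGraph.irrefl])]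
      simp [SimpleGraph.card_neighborFinset_eq_degree]
    rw [h1]
    have := (hf y hy).2
    push_cast
    linarith
  -- near-walk: from y to any w ∈ S y there is a walk of length ≤ 2
  have hwalk : ∀ y ∈ Y, ∀ w ∈ S y, ∃ q : G.Walk y w, q.length ≤ 2 := by
    intro y hy w hw
    obtain ⟨q1, hq1⟩ := walk_of_eq_or_adj G y (f y) (hf y hy).1
    have hw' : w = f y ∨ G.Adj (f y) w := by
      rcases Finset.mem_insert.mp hw with h | h
      · exact Or.inl h
      · exact Or.inr (by simpa using h)
    obtain ⟨q2, hq2⟩ := walk_of_eq_or_adj G (f y) w (by tauto)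
    exact ⟨q1.append q2, by rw [SimpleGraph.Walk.length_append]; omega⟩
  -- disjointness
  have hdisj : (Y : Set V).PairwiseDisjoint S := by
    intro a ha b hb hab
    simp only [Function.onFun]
    rw [Finset.disjoint_left]
    intro w hwa hwb
    obtain ⟨q1, hq1⟩ := hwalk a (by simpa using ha) w hwa
    obtain ⟨q2, hq2⟩ := hwalk b (by simpa using hb) w hwb
    have hq : (q1.append q2.reverse).length ≤ 4 := by
      rw [SimpleGraph.Walk.length_append, SimpleGraph.Walk.length_reverse]; omega
    have hle : G.dist a b ≤ 4 :=
      le_trans (SimpleGraph.dist_le (q1.append q2.reverse)) hq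
    have := hsep a (by simpa using ha) b (by simpa using hb) hab
    omega
  -- counting
  have hsum : (Y.biUnion S).card = ∑ y ∈ Y, (S y).card :=
    Finset.card_biUnion fun a ha b hb hab => hdisj (by simpa using ha) (by simpa using hb) hab
  have hlen : (∑ y ∈ Y, ((S y).card : ℝ)) ≤ (Fintype.card V : ℝ) := by
    have : (Y.biUnion S).card ≤ Fintype.card V := Finset.card_le_univ _
    rw [hsum] at this
    push_cast
    exact_mod_cast this
  have hmain : (Y.card : ℝ) * Real.sqrt (Fintype.card V) ≤ (Fintype.card V : ℝ) := by
    calc (Y.card : ℝ) * Real.sqrt (Fintype.card V)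
        = ∑ _y ∈ Y, Real.sqrt (Fintype.card V) := by
          rw [Finset.sum_const, nsmul_eq_mul]
      _ ≤ ∑ y ∈ Y, ((S y).card : ℝ) := Finset.sum_le_sum hScard
      _ ≤ (Fintype.card V : ℝ) := hlen
  have hsq : (Fintype.card V : ℝ) = Real.sqrt (Fintype.card V) * Real.sqrt (Fintype.card V) :=
    (Real.mul_self_sqrt (by positivity)).symm
  have hpos : 0 < Real.sqrt (Fintype.card V) :=
    Real.sqrt_pos.mpr (by exact_mod_cast Nat.pos_of_ne_zero hn)
  have h2 : (Y.card : ℝ) * Real.sqrt (Fintype.card V) ≤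
      Real.sqrt (Fintype.card V) * Real.sqrt (Fintype.card V) := by rw [← hsq]; exact hmain
  exact le_of_mul_le_mul_right h2 hpos
end

section
/- Let G be a simple undirected graph on n vertices, heavy vertices being those of degree at least √n and light otherwise. Form the auxiliary graph G' by adding, for each connected component C of the induced subgraph G[H] on heavy vertices H, a new center vertex c_C joined by an edge of weight 1/2 to every vertex of C, and including all edges of G incident to at least one light vertex (with weight 1). Then for every vertex v, dist_{G'}(s,v) ≤ dist_G(s,v), where all original edges of G have weight 1. -/
open scoped ENNReal

variable {V : Type*}

/-- Weight of a walk in a graph, for a weight function on pairs of vertices. -/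
noncomputable def walkWeight {α : Type*} {H : SimpleGraph α} (w : α → α → ℝ≥0∞) :
    {u v : α} → H.Walk u v → ℝ≥0∞
  | _, _, SimpleGraph.Walk.nil => 0
  | u, _, SimpleGraph.Walk.cons (v := x) _ p => w u x + walkWeight w p

/-- Weighted shortest-path distance (∞ if there is no walk). -/
noncomputable def wDist {α : Type*} (H : SimpleGraph α) (w : α → α → ℝ≥0∞) (u v : α) : ℝ≥0∞ :=
  ⨅ p : H.Walk u v, walkWeight w p

/-- A vertex is heavy if its degree is at least √n. -/
def Heavy [Fintype V] (G : SimpleGraph V) [DecidableRel G.Adj] (v : V) : Prop :=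
  Real.sqrt (Fintype.card V) ≤ (G.degree v : ℝ)

/-- The set of heavy vertices. -/
def heavySet [Fintype V] (G : SimpleGraph V) [DecidableRel G.Adj] : Set V :=
  {v | Heavy G v}

/-- Connected components of the induced subgraph on heavy vertices. -/
abbrev HeavyComp [Fintype V] (G : SimpleGraph V) [DecidableRel G.Adj] :=
  (G.induce (heavySet G)).ConnectedComponent

/-- The underlying relation of the auxiliary graph: original edges with at least one
light endpoint, and an edge between each heavy vertex and the center of its component. -/
def auxRel [Fintype V] (G : SimpleGraph V) [DecidableRel G.Adj] :
    (V ⊕ HeavyComp G) → (V ⊕ HeavyComp G) → Prop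
  | Sum.inl a, Sum.inl b => G.Adj a b ∧ (¬ Heavy G a ∨ ¬ Heavy G b)
  | Sum.inl a, Sum.inr c =>
      ∃ h : Heavy G a, (G.induce (heavySet G)).connectedComponentMk ⟨a, h⟩ = c
  | _, _ => False

/-- The auxiliary graph `G'`. -/
def auxGraph [Fintype V] (G : SimpleGraph V) [DecidableRel G.Adj] :
    SimpleGraph (V ⊕ HeavyComp G) :=
  SimpleGraph.fromRel (auxRel G)

/-- Edge weights in the auxiliary graph: original edges have weight 1,
center edges have weight 1/2. -/
noncomputable def auxWeight [Fintype V] (G : SimpleGraph V) [DecidableRel G.Adj] :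
    (V ⊕ HeavyComp G) → (V ⊕ HeavyComp G) → ℝ≥0∞
  | Sum.inl _, Sum.inl _ => 1
  | _, _ => 1/2


lemma walkWeight_append {α : Type*} {H : SimpleGraph α} (w : α → α → ℝ≥0∞)
    {u v x : α} (p : H.Walk u v) (q : H.Walk v x) :
    walkWeight w (p.append q) = walkWeight w p + walkWeight w q := by
  induction p with
  | nil => simp [walkWeight]
  | cons h p ih => simp [walkWeight, ih, add_assoc]

lemma step_walk [Fintype V] (G : SimpleGraph V) [DecidableRel G.Adj]
    {a b : V} (hab : G.Adj a b) :
    ∃ q : (auxGraph G).Walk (Sum.inl a) (Sum.inl b), walkWeight (auxWeight G) q ≤ 1 := by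
  by_cases hH : Heavy G a ∧ Heavy G b
  · obtain ⟨ha, hb⟩ := hH
    set c : HeavyComp G := (G.induce (heavySet G)).connectedComponentMk ⟨a, ha⟩ with hc
    have hcb : (G.induce (heavySet G)).connectedComponentMk ⟨b, hb⟩ = c := by
      rw [hc]
      exact (SimpleGraph.ConnectedComponent.connectedComponentMk_eq_of_adj
        (by exact hab.symm : (G.induce (heavySet G)).Adj ⟨b, hb⟩ ⟨a, ha⟩))
    have h1 : (auxGraph G).Adj (Sum.inl a) (Sum.inr c) := by
      refine ⟨by simp, Or.inl ⟨ha, hc.symm⟩⟩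
    have h2 : (auxGraph G).Adj (Sum.inr c) (Sum.inl b) := by
      refine ⟨by simp, Or.inr ⟨hb, hcb⟩⟩
    refine ⟨SimpleGraph.Walk.cons h1 (SimpleGraph.Walk.cons h2 SimpleGraph.Walk.nil), ?_⟩
    simp only [walkWeight, auxWeight, add_zero]
    rw [one_div, ENNReal.inv_two_add_inv_two]
  · have h1 : (auxGraph G).Adj (Sum.inl a) (Sum.inl b) := by
      refine ⟨by simp [hab.ne], Or.inl ⟨hab, ?_⟩⟩
      tauto
    refine ⟨SimpleGraph.Walk.cons h1 SimpleGraph.Walk.nil, ?_⟩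
    simp [walkWeight, auxWeight]

lemma exists_walk [Fintype V] (G : SimpleGraph V) [DecidableRel G.Adj]
    {s v : V} (p : G.Walk s v) :
    ∃ q : (auxGraph G).Walk (Sum.inl s) (Sum.inl v),
      walkWeight (auxWeight G) q ≤ (p.length : ℝ≥0∞) := by
  induction p with
  | nil => exact ⟨SimpleGraph.Walk.nil, by simp [walkWeight]⟩
  | cons h p ih =>
    obtain ⟨q1, hq1⟩ := step_walk G h
    obtain ⟨q2, hq2⟩ := ih
    refine ⟨q1.append q2, ?_⟩
    rw [walkWeight_append]
    simp only [SimpleGraph.Walk.length_cons, Nat.cast_add, Nat.cast_one]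
    calc walkWeight (auxWeight G) q1 + walkWeight (auxWeight G) q2
        ≤ 1 + (p.length : ℝ≥0∞) := add_le_add hq1 hq2
      _ = (p.length : ℝ≥0∞) + 1 := add_comm _ _

/-- dist_{G'}(s,v) ≤ dist_G(s,v) for every vertex v. -/
theorem stmt_3 [Fintype V] [DecidableEq V] (G : SimpleGraph V) [DecidableRel G.Adj]
    (s : V) :
    ∀ v : V,
      wDist (auxGraph G) (auxWeight G) (Sum.inl s) (Sum.inl v) ≤
        ⨅ p : G.Walk s v, (p.length : ℝ≥0∞) := by
  intro v
  refine le_iInf fun p => ?_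
  obtain ⟨q, hq⟩ := exists_walk G p
  exact le_trans (iInf_le _ q) hq
end

section
/- Let G, H, and the auxiliary graph G' be as in the heavy/light construction (heavy = degree ≥ √n; centers of weight-1/2 edges attached to heavy components; all light-incident edges kept with weight 1). Then for every vertex v, dist_G(s,v) ≤ dist_{G'}(s,v) + 5√n. -/
open scoped ENNReal

variable {V : Type*}

/-!
Follow a walk of `G'` backwards from `v`. An edge of `G` changes the distance to `v` in `G` by
at most its weight `1`. A passage `a — center — b` through a heavy component is replaced by a
walk from `a` to `b` inside the component, along which we keep a set `K` of heavy vertices with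
pairwise disjoint neighbourhoods: a vertex within distance `2` of `K` is reached through `K` at
no cost, and any other vertex joins `K`, paying `3` for the edge by which it is entered and the
later detour back to it. Hence `dist_G(s, v) ≤ w(p) + 3|K|`, and `|K| √n ≤ ∑_{u ∈ K} deg u ≤ n`
gives `|K| ≤ √n`.
-/

open SimpleGraph Finset

namespace SimpleGraph

variable {G : SimpleGraph V} {u v a b : V}

lemma iInf_length_le_edist (u v : V) : ⨅ p : G.Walk u v, (p.length : ℝ≥0∞) ≤ G.edist u v := by
  by_cases h : G.Reachable u v
  · obtain ⟨p, hp⟩ := h.exists_walk_length_eq_edist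
    rw [← hp, ENat.toENNReal_coe]
    exact iInf_le _ p
  · rw [edist_eq_top_of_not_reachable h, ENat.toENNReal_top]
    exact le_top

lemma toENNReal_edist_le_add {k : ℕ} (h : G.edist a u ≤ k) :
    (G.edist a v : ℝ≥0∞) ≤ k + G.edist u v := by
  rw [← ENat.toENNReal_coe, ← ENat.toENNReal_add, ENat.toENNReal_le]
  exact G.edist_triangle.trans (by gcongr)

lemma Adj.toENNReal_edist_le (hab : G.Adj a b) (v : V) :
    (G.edist a v : ℝ≥0∞) ≤ 1 + G.edist b v := by
  simpa using toENNReal_edist_le_add (k := 1) (edist_eq_one_iff_adj.2 hab).le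

variable [Fintype V] [DecidableRel G.Adj]

def IsHeavyPacking (G : SimpleGraph V) [DecidableRel G.Adj] (K : Finset V) : Prop :=
  (∀ u ∈ K, Heavy G u) ∧ (K : Set V).PairwiseDisjoint fun u => G.neighborFinset u

lemma isHeavyPacking_empty : G.IsHeavyPacking ∅ := by
  simp [IsHeavyPacking]

lemma IsHeavyPacking.insert [DecidableEq V] {K : Finset V} (hK : G.IsHeavyPacking K)
    (ha : Heavy G a) (hfar : ∀ u ∈ K, 2 < G.edist a u) : G.IsHeavyPacking (insert a K) := by
  refine ⟨by simpa [ha] using hK.1, ?_⟩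
  rw [coe_insert]
  refine hK.2.insert fun u hu _ => Finset.disjoint_left.2 fun w hwa hwu => ?_
  have haw : G.Adj a w := (G.mem_neighborFinset a w).1 hwa
  have hwu : G.Adj w u := ((G.mem_neighborFinset u w).1 hwu).symm
  have hau : G.edist a u ≤ 2 := by simpa using G.edist_le (haw.toWalk.append hwu.toWalk)
  exact (hfar u hu).not_ge hau

lemma IsHeavyPacking.card_le_sqrt {K : Finset V} (hK : G.IsHeavyPacking K) :
    (#K : ℝ) ≤ √(Fintype.card V) := by
  classical
  rcases K.eq_empty_or_nonempty with rfl | ⟨u, -⟩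
  · simp
  have hn : 0 < √(Fintype.card V) := Real.sqrt_pos.2 (by exact_mod_cast Fintype.card_pos_iff.2 ⟨u⟩)
  refine le_of_mul_le_mul_right ?_ hn
  calc (#K : ℝ) * √(Fintype.card V) = #K • √(Fintype.card V) := (nsmul_eq_mul _ _).symm
    _ ≤ ∑ u ∈ K, (G.degree u : ℝ) := card_nsmul_le_sum _ _ _ hK.1
    _ = #(K.biUnion fun u => G.neighborFinset u) := by
        rw [card_biUnion hK.2]
        push_cast
        simp only [card_neighborFinset_eq_degree]
    _ ≤ Fintype.card V := by exact_mod_cast card_le_univ _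
    _ = √(Fintype.card V) * √(Fintype.card V) := (Real.mul_self_sqrt (Nat.cast_nonneg _)).symm

def ReachesWithin (G : SimpleGraph V) [DecidableRel G.Adj] (v : V) (B : ℝ≥0∞) (z : V) : Prop :=
  ∃ K : Finset V, G.IsHeavyPacking K ∧ (∀ u ∈ K, (G.edist u v : ℝ≥0∞) + 2 ≤ B + 3 * #K) ∧
    (G.edist z v : ℝ≥0∞) ≤ B + 3 * #K

lemma reachesWithin_self : G.ReachesWithin v 0 v :=
  ⟨∅, isHeavyPacking_empty, by simp, by simp⟩

lemma ReachesWithin.mono {B B' : ℝ≥0∞} (hB : B ≤ B') (h : G.ReachesWithin v B a) :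
    G.ReachesWithin v B' a := by
  obtain ⟨K, hK, hKv, hav⟩ := h
  exact ⟨K, hK, fun u hu => (hKv u hu).trans (by gcongr), hav.trans (by gcongr)⟩

lemma ReachesWithin.of_adj {B : ℝ≥0∞} (hab : G.Adj a b) (h : G.ReachesWithin v B b) :
    G.ReachesWithin v (1 + B) a := by
  obtain ⟨K, hK, hKv, hbv⟩ := h
  refine ⟨K, hK, fun u hu => (hKv u hu).trans (by gcongr; exact le_add_self), ?_⟩
  calc (G.edist a v : ℝ≥0∞) ≤ 1 + G.edist b v := hab.toENNReal_edist_le v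
    _ ≤ 1 + (B + 3 * #K) := by gcongr
    _ = 1 + B + 3 * #K := (add_assoc _ _ _).symm

lemma ReachesWithin.of_adj_heavy {B : ℝ≥0∞} (hab : G.Adj a b) (ha : Heavy G a)
    (h : G.ReachesWithin v B b) : G.ReachesWithin v B a := by
  classical
  obtain ⟨K, hK, hKv, hbv⟩ := h
  by_cases hnear : ∃ u ∈ K, G.edist a u ≤ 2
  · obtain ⟨u, hu, hau⟩ := hnear
    refine ⟨K, hK, hKv, ?_⟩
    calc (G.edist a v : ℝ≥0∞) ≤ 2 + G.edist u v := by
          simpa using toENNReal_edist_le_add (k := 2) hau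
      _ ≤ B + 3 * #K := by rw [add_comm]; exact hKv u hu
  push Not at hnear
  have haK : a ∉ K := fun haK => by simpa using hnear a haK
  have hav : (G.edist a v : ℝ≥0∞) + 2 ≤ B + 3 * #(insert a K) := by
    calc (G.edist a v : ℝ≥0∞) + 2 ≤ 1 + G.edist b v + 2 := by
          gcongr; exact hab.toENNReal_edist_le v
      _ ≤ 1 + (B + 3 * #K) + 2 := by gcongr
      _ = B + 3 * #(insert a K) := by rw [card_insert_of_notMem haK]; push_cast; ring
  refine ⟨insert a K, hK.insert ha hnear, fun u hu => ?_, le_self_add.trans hav⟩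
  rcases mem_insert.1 hu with rfl | hu
  · exact hav
  · exact (hKv u hu).trans (by gcongr; exact subset_insert a K)

lemma ReachesWithin.of_reachable_heavy {B : ℝ≥0∞} {a b : heavySet G}
    (hab : (G.induce (heavySet G)).Reachable a b) (h : G.ReachesWithin v B b) :
    G.ReachesWithin v B a := by
  obtain ⟨p⟩ := hab
  induction p with
  | nil => exact h
  | cons hadj _ ih => exact (ih h).of_adj_heavy (by simpa using hadj) (Subtype.prop _)

def auxCluster (G : SimpleGraph V) [DecidableRel G.Adj] : V ⊕ HeavyComp G → Set V
  | .inl z => {z}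
  | .inr c => {a | ∃ h : Heavy G a, (G.induce (heavySet G)).connectedComponentMk ⟨a, h⟩ = c}

lemma ReachesWithin.of_mem_auxCluster {B : ℝ≥0∞} {c : HeavyComp G}
    (ha : a ∈ auxCluster G (.inr c)) (hb : b ∈ auxCluster G (.inr c))
    (h : G.ReachesWithin v B b) : G.ReachesWithin v B a := by
  obtain ⟨ha, rfl⟩ := ha
  obtain ⟨hb, hbc⟩ := hb
  exact h.of_reachable_heavy (a := ⟨a, ha⟩) (b := ⟨b, hb⟩) (ConnectedComponent.exact hbc.symm)

lemma auxGraph_adj_inl_inl (h : (auxGraph G).Adj (.inl a) (.inl b)) : G.Adj a b := by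
  simp only [auxGraph, fromRel_adj, auxRel] at h
  exact h.2.elim (·.1) (·.1.symm)

lemma auxGraph_adj_inl_inr {c : HeavyComp G} (h : (auxGraph G).Adj (.inl a) (.inr c)) :
    a ∈ auxCluster G (.inr c) := by
  simpa [auxGraph, auxRel, auxCluster] using h

lemma not_auxGraph_adj_inr_inr {c d : HeavyComp G} : ¬ (auxGraph G).Adj (.inr c) (.inr d) := by
  simp [auxGraph, auxRel]

lemma exists_mem_auxCluster_of_adj {t t' : V ⊕ HeavyComp G} (h : (auxGraph G).Adj t t')
    (ha : a ∈ auxCluster G t) : ∃ b ∈ auxCluster G t', ∀ B : ℝ≥0∞,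
      G.ReachesWithin v B b → G.ReachesWithin v (auxWeight G t t' + B) a := by
  rcases t with z | c <;> rcases t' with z' | c'
  · obtain rfl : a = z := ha
    exact ⟨z', rfl, fun B hB => hB.of_adj (auxGraph_adj_inl_inl h)⟩
  · obtain rfl : a = z := ha
    exact ⟨a, auxGraph_adj_inl_inr h, fun B hB => hB.mono le_add_self⟩
  · exact ⟨z', rfl, fun B hB =>
      (hB.of_mem_auxCluster ha (auxGraph_adj_inl_inr h.symm)).mono le_add_self⟩
  · exact (not_auxGraph_adj_inr_inr h).elim

lemma reachesWithin_walkWeight {t t' : V ⊕ HeavyComp G} (p : (auxGraph G).Walk t t')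
    (ha : a ∈ auxCluster G t) (hv : v ∈ auxCluster G t') :
    G.ReachesWithin v (walkWeight (auxWeight G) p) a := by
  induction p generalizing a with
  | @nil t =>
    rcases t with z | c
    · obtain rfl : a = z := ha
      exact hv ▸ reachesWithin_self
    · exact reachesWithin_self.of_mem_auxCluster ha hv
  | cons h _ ih =>
    obtain ⟨b, hb, hstep⟩ := exists_mem_auxCluster_of_adj h ha
    exact hstep _ (ih hb hv)

end SimpleGraph

theorem stmt_4_general [Fintype V] (G : SimpleGraph V) [DecidableRel G.Adj]
    (s : V) :
    ∀ v : V,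
      (⨅ p : G.Walk s v, (p.length : ℝ≥0∞)) ≤
        wDist (auxGraph G) (auxWeight G) (Sum.inl s) (Sum.inl v) +
          ENNReal.ofReal (5 * Real.sqrt (Fintype.card V)) := by
  intro v
  rw [wDist, ENNReal.iInf_add]
  refine le_iInf fun p => ?_
  obtain ⟨K, hK, -, hsv⟩ := reachesWithin_walkWeight p rfl rfl
  have hK3 : 3 * (#K : ℝ≥0∞) ≤ ENNReal.ofReal (5 * √(Fintype.card V)) := by
    rw [← ENNReal.ofReal_ofNat 3, ← ENNReal.ofReal_natCast, ← ENNReal.ofReal_mul (by norm_num)]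
    apply ENNReal.ofReal_le_ofReal
    linarith [hK.card_le_sqrt, Real.sqrt_nonneg (Fintype.card V)]
  calc ⨅ q : G.Walk s v, (q.length : ℝ≥0∞) ≤ G.edist s v := iInf_length_le_edist s v
    _ ≤ walkWeight (auxWeight G) p + 3 * #K := hsv
    _ ≤ _ := by gcongr

/-- dist_G(s,v) ≤ dist_{G'}(s,v) + 5√n for every vertex v. -/
theorem stmt_4 [Fintype V] [DecidableEq V] (G : SimpleGraph V) [DecidableRel G.Adj]
    (s : V) :
    ∀ v : V,
      (⨅ p : G.Walk s v, (p.length : ℝ≥0∞)) ≤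
        wDist (auxGraph G) (auxWeight G) (Sum.inl s) (Sum.inl v) +
          ENNReal.ofReal (5 * Real.sqrt (Fintype.card V)) :=
  stmt_4_general G s
end

section
/- Assume all shortest paths in a weighted directed graph G are unique. A path is locally shortest if every proper subpath is a shortest path. Then the number of locally shortest paths in G is at most m·n, where n = |V| and m = |E|. -/
open scoped ENNReal NNReal

/-- Walks in a directed graph given by a relation `A`. -/
inductive DWalk {V : Type*} (A : V → V → Prop) : V → V → Type _ where
  | nil {v : V} : DWalk A v v
  | cons {u x w : V} : A u x → DWalk A x w → DWalk A u w

namespace DWalk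

variable {V : Type*} {A : V → V → Prop}

/-- The weight of a directed walk, for nonnegative edge weights. -/
def weight (ℓ : V → V → ℝ≥0) : {u v : V} → DWalk A u v → ℝ≥0
  | _, _, nil => 0
  | u, _, cons (x := b) _ p => ℓ u b + p.weight ℓ

/-- The number of edges of a directed walk. -/
def length : {u v : V} → DWalk A u v → ℕ
  | _, _, nil => 0
  | _, _, cons _ p => p.length + 1

/-- Concatenation of directed walks. -/
def append : {u v w : V} → DWalk A u v → DWalk A v w → DWalk A u w
  | _, _, _, nil, q => q
  | _, _, _, cons h p, q => cons h (p.append q)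

/-- The walk obtained by dropping the last edge (together with its new endpoint). -/
def dropLast : {u v : V} → DWalk A u v → Σ w : V, DWalk A u w
  | _, _, nil => ⟨_, nil⟩
  | _, _, cons _ nil => ⟨_, nil⟩
  | _, _, cons h (cons h' p) => ⟨_, cons h (dropLast (cons h' p)).2⟩

end DWalk

/-- Weighted distance in a directed graph (∞ if there is no walk). -/
noncomputable def dDist {V : Type*} (A : V → V → Prop) (ℓ : V → V → ℝ≥0) (u v : V) : ℝ≥0∞ :=
  ⨅ p : DWalk A u v, (p.weight ℓ : ℝ≥0∞)

/-- A walk is a shortest path if its weight equals the distance between its endpoints. -/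
def IsShortest {V : Type*} {A : V → V → Prop} (ℓ : V → V → ℝ≥0) {u v : V}
    (p : DWalk A u v) : Prop :=
  (p.weight ℓ : ℝ≥0∞) = dDist A ℓ u v

/-- A walk (with at least one edge) is locally shortest if its two maximal proper
subpaths (dropping the first, resp. last, vertex) are shortest paths. -/
def LocallyShortest {V : Type*} {A : V → V → Prop} (ℓ : V → V → ℝ≥0) {u v : V}
    (p : DWalk A u v) : Prop :=
  ∃ (x : V) (h : A u x) (q : DWalk A x v),
    p = DWalk.cons h q ∧ IsShortest ℓ q ∧ IsShortest ℓ (p.dropLast).2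

/-- The second vertex of a walk (its start if the walk is empty). -/
def DWalk.second {V : Type*} {A : V → V → Prop} : {u v : V} → DWalk A u v → V
  | u, _, .nil => u
  | _, _, .cons (x := b) _ _ => b

/-- If all shortest paths are unique in a directed graph with positive real edge
weights, then the number of locally shortest paths is at most m·n. -/
theorem stmt_11 {V : Type*} [Fintype V] (A : V → V → Prop) (ℓ : V → V → ℝ≥0)
    (hpos : ∀ a b, A a b → 0 < ℓ a b)
    (huniq : ∀ (u v : V) (p q : DWalk A u v),
      IsShortest ℓ p → IsShortest ℓ q → p = q) :
    Set.ncard {P : Σ u v : V, DWalk A u v | LocallyShortest ℓ P.2.2} ≤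
      Set.ncard {e : V × V | A e.1 e.2} * Fintype.card V := by
  classical
  set S : Set (Σ u v : V, DWalk A u v) := {P | LocallyShortest ℓ P.2.2} with hS
  set T : Set (V × V) := {e : V × V | A e.1 e.2} with hT
  -- the map sending a locally shortest path to (first edge, last vertex)
  have key : ∀ P : S, A P.1.1 P.1.2.2.second := by
    rintro ⟨⟨u, v, p⟩, hP⟩
    obtain ⟨x, h, q, hpq, _⟩ := hP
    have hpq' : p = DWalk.cons h q := hpq
    show A u p.second
    rw [hpq']
    exact h
  let F : S → T × V := fun P => ⟨⟨(P.1.1, P.1.2.2.second), key P⟩, P.1.2.1⟩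
  have hinj : Function.Injective F := by
    rintro ⟨⟨u, v, p⟩, hP⟩ ⟨⟨u', v', p'⟩, hP'⟩ hFeq
    obtain ⟨x, h, q, hpq, hq, _⟩ := hP
    obtain ⟨x', h', q', hpq', hq', _⟩ := hP'
    have e1 : p = DWalk.cons h q := hpq
    have e2 : p' = DWalk.cons h' q' := hpq'
    simp only [F, Subtype.mk.injEq, Prod.mk.injEq] at hFeq
    obtain ⟨⟨hu, hx⟩, hv⟩ := hFeq
    subst hu; subst hv
    have hx' : x = x' := by simpa [e1, e2, DWalk.second] using hx
    subst hx'
    have hqq : q = q' := huniq _ _ q q' hq hq'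
    subst hqq
    have hpp : p = p' := e1.trans e2.symm
    subst hpp
    rfl
  have h1 : Nat.card S ≤ Nat.card (T × V) :=
    Nat.card_le_card_of_injective F hinj
  have h2 : Nat.card (T × V) = Nat.card T * Fintype.card V := by
    rw [Nat.card_prod]
    congr 1
    exact Nat.card_eq_fintype_card
  calc Set.ncard S = Nat.card S := rfl
    _ ≤ Nat.card T * Fintype.card V := by rw [← h2]; exact h1
    _ = Set.ncard T * Fintype.card V := rfl
end

section
/- Let G be a directed graph and d a vertex. Split d into d₁ and d₂, replacing every edge (u,d) by (u,d₁) and every edge (d,v) by (d₂,v), obtaining G_d. Then G is strongly connected if and only if in G_d every vertex other than d₁ is reachable from d₂ and every vertex other than d₂ can reach d₁. Moreover, if G is strongly connected then the condensation of G_d is acyclic with d₂ as a source and d₁ as a sink. -/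
/-- The split graph `G_d`: `d` is split into `d₁ = Sum.inr false` (receiving all
in-edges of `d`) and `d₂ = Sum.inr true` (emitting all out-edges of `d`); all
other edges are kept. -/
def splitRel {V : Type*} (A : V → V → Prop) (d : V) :
    ({x : V // x ≠ d} ⊕ Bool) → ({x : V // x ≠ d} ⊕ Bool) → Prop
  | Sum.inl u, Sum.inl v => A u.1 v.1
  | Sum.inl u, Sum.inr b => b = false ∧ A u.1 d
  | Sum.inr b, Sum.inl v => b = true ∧ A d v.1
  | Sum.inr b, Sum.inr b' => b = true ∧ b' = false ∧ A d d

private def splitProj {V : Type*} (d : V) : ({x : V // x ≠ d} ⊕ Bool) → V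
  | Sum.inl u => u.1
  | Sum.inr _ => d

private lemma splitProj_step {V : Type*} {A : V → V → Prop} {d : V}
    {x y : ({x : V // x ≠ d} ⊕ Bool)} (h : splitRel A d x y) :
    A (splitProj d x) (splitProj d y) := by
  cases x <;> cases y <;> simp_all [splitRel, splitProj]

private lemma splitProj_rtg {V : Type*} {A : V → V → Prop} {d : V}
    {x y : ({x : V // x ≠ d} ⊕ Bool)} (h : Relation.ReflTransGen (splitRel A d) x y) :
    Relation.ReflTransGen A (splitProj d x) (splitProj d y) := by
  induction h with
  | refl => exact Relation.ReflTransGen.refl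
  | tail _ h ih => exact ih.tail (splitProj_step h)

private lemma reach_from_d {V : Type*} {A : V → V → Prop} {d : V}
    {v : V} (h : Relation.ReflTransGen A d v) (hv : v ≠ d) :
    Relation.ReflTransGen (splitRel A d) (Sum.inr true) (Sum.inl ⟨v, hv⟩) := by
  induction h with
  | refl => exact absurd rfl hv
  | @tail w v' hdw hwv ih =>
    by_cases hw : w = d
    · exact Relation.ReflTransGen.single
        (show splitRel A d (Sum.inr true) (Sum.inl ⟨v', hv⟩) from ⟨rfl, hw ▸ hwv⟩)
    · exact (ih hw).tail (show splitRel A d (Sum.inl ⟨w, hw⟩) (Sum.inl ⟨v', hv⟩) from hwv)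

private lemma reach_to_d {V : Type*} {A : V → V → Prop} {d : V}
    {u : V} (h : Relation.ReflTransGen A u d) (hu : u ≠ d) :
    Relation.ReflTransGen (splitRel A d) (Sum.inl ⟨u, hu⟩) (Sum.inr false) := by
  induction h using Relation.ReflTransGen.head_induction_on with
  | refl => exact absurd rfl hu
  | @head u' w huw hwd ih =>
    by_cases hw : w = d
    · exact Relation.ReflTransGen.single
        (show splitRel A d (Sum.inl ⟨u', hu⟩) (Sum.inr false) from ⟨rfl, hw ▸ huw⟩)
    · exact Relation.ReflTransGen.head
        (show splitRel A d (Sum.inl ⟨u', hu⟩) (Sum.inl ⟨w, hw⟩) from huw) (ih hw)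

/-- `G` is strongly connected iff in `G_d` every vertex other than `d₁` is reachable
from `d₂` and every vertex other than `d₂` can reach `d₁`; moreover if `G` is strongly
connected then `d₂` is a source and `d₁` is a sink of the condensation of `G_d`
(no vertex can reach `d₂` and `d₁` can reach no vertex). -/
theorem stmt_15 {V : Type*} (A : V → V → Prop) (d : V) :
    ((∀ u v : V, Relation.ReflTransGen A u v) ↔
      ((∀ x, x ≠ Sum.inr false → Relation.ReflTransGen (splitRel A d) (Sum.inr true) x) ∧
       (∀ x, x ≠ Sum.inr true → Relation.ReflTransGen (splitRel A d) x (Sum.inr false)))) ∧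
    ((∀ u v : V, Relation.ReflTransGen A u v) →
      ((∀ x, ¬ Relation.TransGen (splitRel A d) x (Sum.inr true)) ∧
       (∀ x, ¬ Relation.TransGen (splitRel A d) (Sum.inr false) x))) := by
  constructor
  · constructor
    · intro hsc
      constructor
      · rintro (⟨v, hv⟩ | b) hx
        · exact reach_from_d (hsc d v) hv
        · cases b
          · exact absurd rfl hx
          · exact Relation.ReflTransGen.refl
      · rintro (⟨u, hu⟩ | b) hx
        · exact reach_to_d (hsc u d) hu
        · cases b
          · exact Relation.ReflTransGen.refl
          · exact absurd rfl hx
    · rintro ⟨h₁, h₂⟩ u v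
      have hud : Relation.ReflTransGen A u d := by
        by_cases hu : u = d
        · exact hu ▸ Relation.ReflTransGen.refl
        · have := splitProj_rtg (h₂ (Sum.inl ⟨u, hu⟩) (by simp))
          simpa [splitProj] using this
      have hdv : Relation.ReflTransGen A d v := by
        by_cases hv : v = d
        · exact hv ▸ Relation.ReflTransGen.refl
        · have := splitProj_rtg (h₁ (Sum.inl ⟨v, hv⟩) (by simp))
          simpa [splitProj] using this
      exact hud.trans hdv
  · intro _
    constructor
    · intro x h
      cases h with
      | single h => rcases x with _ | b <;> simp_all [splitRel]
      | tail _ h =>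
          rename_i y _
          rcases y with _ | b <;> simp_all [splitRel]
    · intro x h
      have first : ∀ {a b : ({x : V // x ≠ d} ⊕ Bool)}, Relation.TransGen (splitRel A d) a b →
          ∃ c, splitRel A d a c := by
        intro a b h
        induction h with
        | single h => exact ⟨_, h⟩
        | tail _ _ ih => exact ih
      obtain ⟨c, hc⟩ := first h
      rcases c with _ | b <;> simp_all [splitRel]
end
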